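/- arXiv:1011.1955 — 3 statements merged into one kernel-verified Lean document; each statement's English description precedes it below -/
import Mathlib

section
/- For all integers i, j ≥ 0, the entry m_{i,j} is divisible by 5^(max(0, ⌊(5j − i + 1)/2⌋)); equivalently, the 5-adic valuation of m_{i,j} is at least ⌊(5j − i + 1)/2⌋ whenever m_{i,j} ≠ 0. -/
/-- The matrix `(m_{i,j})` of Theorem 3.1 (powers of 5): rows `0 ≤ i ≤ 4` are given
explicitly, and for `i ≥ 5`, `m_{i,0} = 0` while for `j ≥ 1`,
`m_{i,j} = 25 m_{i−1,j−1} + 25 m_{i−2,j−1} + 15 m_{i−3,j−1} + 5 m_{i−4,j−1} + m_{i−5,j−1}`. -/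
def mMat : ℕ → ℕ → ℤ
  | 0, 0 => 1
  | 1, 1 => 5 ^ 3
  | 2, 1 => 4 * 5 ^ 2
  | 2, 2 => 5 ^ 5
  | 3, 1 => 9 * 5
  | 3, 2 => 9 * 5 ^ 4
  | 3, 3 => 5 ^ 7
  | 4, 1 => 2 * 5
  | 4, 2 => 44 * 5 ^ 3
  | 4, 3 => 14 * 5 ^ 6
  | 4, 4 => 5 ^ 9
  | i + 5, j + 1 =>
      25 * mMat (i + 4) j + 25 * mMat (i + 3) j + 15 * mMat (i + 2) j +
        5 * mMat (i + 1) j + mMat i j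
  | _, _ => 0
  termination_by i j => (j, i)

/-- `a_{i,j} = m_{6i, i+j}`. -/
def aMat (i j : ℕ) : ℤ := mMat (6 * i) (i + j)

/-- `b_{i,j} = m_{6i+1, i+j}`. -/
def bMat (i j : ℕ) : ℤ := mMat (6 * i + 1) (i + j)


lemma aux5 (e f c : ℕ) (k m : ℤ) (hk : (5:ℤ)^c ∣ k) (h : e ≤ c + f)
    (hd : (5:ℤ)^f ∣ m) : (5:ℤ)^e ∣ k * m :=
  (pow_dvd_pow 5 h).trans (by rw [pow_add]; exact mul_dvd_mul hk hd)

/-- Lemma 3.6: `5^(max(0, ⌊(5j − i + 1)/2⌋))` divides `m_{i,j}`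
(the `toNat` of the integer floor realizes the `max` with `0`). -/
theorem mMat_five_valuation (i j : ℕ) :
    (5 : ℤ) ^ ((5 * (j : ℤ) - (i : ℤ) + 1) / 2).toNat ∣ mMat i j := by
  induction i, j using mMat.induct with
  | case12 i j ih1 ih2 ih3 ih4 ih5 =>
      have h : mMat (i+5) (j+1) = 25 * mMat (i + 4) j + 25 * mMat (i + 3) j +
          15 * mMat (i + 2) j + 5 * mMat (i + 1) j + mMat i j := by rw [mMat]
      push_cast at ih1 ih2 ih3 ih4 ⊢
      rw [show ((i:ℕ).succ.succ.succ.succ.succ : ℕ) = i + 5 from rfl, h]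
      refine dvd_add (dvd_add (dvd_add (dvd_add ?_ ?_) ?_) ?_) ?_
      · exact aux5 _ _ 2 25 _ (by norm_num) (by omega) ih1
      · exact aux5 _ _ 2 25 _ (by norm_num) (by omega) ih2
      · exact aux5 _ _ 1 15 _ (by norm_num) (by omega) ih3
      · exact aux5 _ _ 1 5 _ (by norm_num) (by omega) ih4
      · exact (pow_dvd_pow 5 (by omega)).trans ih5
  | case13 x y h1 h2 h3 h4 h5 h6 h7 h8 h9 h10 h11 h12 =>
      have h : mMat x y = 0 := by rw [mMat.eq_def]; split <;> simp_all
      simp [h]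
  | _ => norm_num [mMat] <;> decide
end

section
/- For all integers i, j ≥ 0: a_{i,j} is divisible by 5^(max(0, ⌊(5j − i + 1)/2⌋)) and b_{i,j} is divisible by 5^(max(0, ⌊(5j − i)/2⌋)), where a_{i,j} = m_{6i, i+j} and b_{i,j} = m_{6i+1, i+j}. -/
/-!
The recurrence coefficients `25, 25, 15, 5, 1` of `m_{r-1}, …, m_{r-5}` have 5-adic valuations
`2, 2, 1, 1, 0`, which make up for the drop of the bound `⌊(5c - r + 1)/2⌋` when passing from
`m_{r-k, c-1}` to `m_{r,c}`. So the bound, checked on the explicit rows `r < 5`, propagates by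
induction on the column; `a_{i,j}` and `b_{i,j}` are its cases `r = 6i, 6i + 1`, `c = i + j`.
-/

theorem pow_dvd_mul_of_pow_dvd_of_pow_sub_dvd {M : Type*} [CommMonoid M] {p a b : M} {k n : ℕ}
    (ha : p ^ k ∣ a) (hb : p ^ (n - k) ∣ b) : p ^ n ∣ a * b :=
  (pow_dvd_pow p (by omega : n ≤ k + (n - k))).trans (pow_add p k (n - k) ▸ mul_dvd_mul ha hb)

theorem mMat_eq_zero_of_lt_five_of_lt {r c : ℕ} (hr : r < 5) (hc : r < c) : mMat r c = 0 := by
  rw [mMat.eq_13] <;> intros <;> omega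

theorem five_pow_dvd_mMat_of_lt_five {r c n : ℕ} (hr : r < 5) (h : 2 * n ≤ 5 * c + 1 - r) :
    (5 : ℤ) ^ n ∣ mMat r c := by
  rcases lt_or_ge r c with hc | hc
  · simp [mMat_eq_zero_of_lt_five_of_lt hr hc]
  have explicit : (5 : ℤ) ^ ((5 * c + 1 - r) / 2) ∣ mMat r c := by
    interval_cases r <;> interval_cases c <;> norm_num [mMat]
  exact (pow_dvd_pow 5 (by omega)).trans explicit

-- The subtraction `5 * c + 1 - r` truncates at `0`, which forces `n = 0` when `5c + 1 < r`.
theorem five_pow_dvd_mMat {r c n : ℕ} (h : 2 * n ≤ 5 * c + 1 - r) : (5 : ℤ) ^ n ∣ mMat r c := by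
  induction c generalizing r n with
  | zero => simp [show n = 0 by omega]
  | succ c ih =>
    rcases lt_or_ge r 5 with hr | hr
    · exact five_pow_dvd_mMat_of_lt_five hr h
    obtain ⟨i, rfl⟩ := Nat.exists_eq_add_of_le' hr
    rw [mMat.eq_12]
    have h25 : (5 : ℤ) ^ 2 ∣ 25 := by norm_num
    have h5 : (5 : ℤ) ^ 1 ∣ 5 := dvd_of_eq (pow_one 5)
    have h15 : (5 : ℤ) ^ 1 ∣ 15 := by norm_num
    refine dvd_add (dvd_add (dvd_add (dvd_add ?_ ?_) ?_) ?_) (ih (by omega))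
    · exact pow_dvd_mul_of_pow_dvd_of_pow_sub_dvd h25 (ih (by omega))
    · exact pow_dvd_mul_of_pow_dvd_of_pow_sub_dvd h25 (ih (by omega))
    · exact pow_dvd_mul_of_pow_dvd_of_pow_sub_dvd h15 (ih (by omega))
    · exact pow_dvd_mul_of_pow_dvd_of_pow_sub_dvd h5 (ih (by omega))

/-- Corollary 3.7: `5^(max(0, ⌊(5j − i + 1)/2⌋))` divides `a_{i,j}` and
`5^(max(0, ⌊(5j − i)/2⌋))` divides `b_{i,j}`. -/
theorem aMat_bMat_five_valuation (i j : ℕ) :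
    (5 : ℤ) ^ ((5 * (j : ℤ) - (i : ℤ) + 1) / 2).toNat ∣ aMat i j ∧
    (5 : ℤ) ^ ((5 * (j : ℤ) - (i : ℤ)) / 2).toNat ∣ bMat i j :=
  ⟨five_pow_dvd_mMat (by omega), five_pow_dvd_mMat (by omega)⟩
end

section
/- For all integers b ≥ 2 and j ≥ 1: x_{2b−1,j} is divisible by 5^(5b − 6 + max(0, ⌊(5j − 7)/2⌋)), and x_{2b,j} is divisible by 5^(5b − 4 + ⌊(5j − 5)/2⌋). -/
/-- The vectors `x_a = (x_{a,i})_{i≥0}`: `x₁ = (−5, 5⁴, 0, 0, …)`, and for `a ≥ 1`,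
`x_{a+1} = x_a·A` if `a` is odd and `x_{a+1} = x_a·B` if `a` is even
(the sums over `i ≥ 0` have finite support; `∑ᶠ` is the finite sum). -/
noncomputable def xVec : ℕ → ℕ → ℤ
  | 0, _ => 0
  | 1, i => if i = 0 then -5 else if i = 1 then 5 ^ 4 else 0
  | a + 2, j =>
      if a % 2 = 0 then ∑ᶠ i, xVec (a + 1) i * aMat i j
      else ∑ᶠ i, xVec (a + 1) i * bMat i j

/-! The entries of `M` satisfy `5 ^ ⌈(5j − i)/2⌉ ∣ m_{i,j}`: this holds on the first five rows by
inspection and propagates through the recurrence, whose coefficients `25, 25, 15, 5, 1` make up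
exactly for the shift of `i` by `1, …, 5`. Weighting the `i`-th coordinate of a vector by
`5 ^ ⌊(5i − 7)/2⌋` (odd steps) or `5 ^ ⌊(5i − 5)/2⌋` (even steps), multiplication by `A` therefore
gains a factor `5²` and multiplication by `B` a factor `5³`, the only entries that need more than
the generic bound being `b_{0,1} = 5³` and `b_{1,1} = 4 · 5³`. Since `x_{a,0}` vanishes from `a = 3`
on, starting from `x₂` each pair of steps gains `5⁵`. -/

theorem pow_dvd_mul_of_pow_dvd {M : Type*} [CommMonoid M] {p x y : M} {a b e : ℕ}
    (hx : p ^ a ∣ x) (hy : p ^ b ∣ y) (he : e ≤ a + b) : p ^ e ∣ x * y :=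
  (pow_dvd_pow p he).trans (pow_add p a b ▸ mul_dvd_mul hx hy)

theorem mMat_add_five_zero (i : ℕ) : mMat (i + 5) 0 = 0 := by
  simp [mMat]

theorem mMat_add_five_add_one (i j : ℕ) :
    mMat (i + 5) (j + 1) = 25 * mMat (i + 4) j + 25 * mMat (i + 3) j + 15 * mMat (i + 2) j +
      5 * mMat (i + 1) j + mMat i j := by
  simp [mMat]

theorem mMat_eq_zero_of_five_mul_lt {i j : ℕ} (h : 5 * j < i) : mMat i j = 0 := by
  induction j generalizing i with
  | zero =>
    rcases Nat.lt_or_ge i 5 with hi | hi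
    · interval_cases i <;> simp [mMat]
    · obtain ⟨k, rfl⟩ := Nat.exists_eq_add_of_le' hi
      exact mMat_add_five_zero k
  | succ j ih =>
    obtain ⟨k, rfl⟩ : ∃ k, i = k + 5 := ⟨i - 5, by omega⟩
    simp only [mMat_add_five_add_one, ih (by omega : 5 * j < k + 4), ih (by omega : 5 * j < k + 3),
      ih (by omega : 5 * j < k + 2), ih (by omega : 5 * j < k + 1), ih (by omega : 5 * j < k)]
    norm_num

theorem five_pow_dvd_mMat_of_lt_five_s19 {i : ℕ} (hi : i < 5) (j : ℕ) :
    (5 : ℤ) ^ ((5 * j + 1 - i) / 2) ∣ mMat i j := by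
  by_cases hj : j < 5
  · interval_cases i <;> interval_cases j <;> norm_num [mMat]
  · obtain ⟨l, rfl⟩ : ∃ l, j = l + 5 := ⟨j - 5, by omega⟩
    interval_cases i <;> simp [mMat]

/-- `(5 * j + 1 - i) / 2` is `⌈(5j − i)/2⌉`, truncated at `0`. -/
theorem five_pow_dvd_mMat_s19 (i j : ℕ) : (5 : ℤ) ^ ((5 * j + 1 - i) / 2) ∣ mMat i j := by
  induction j generalizing i with
  | zero => simp [show (5 * 0 + 1 - i) / 2 = 0 by omega]
  | succ j ih =>
    rcases Nat.lt_or_ge i 5 with hi | hi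
    · exact five_pow_dvd_mMat_of_lt_five_s19 hi _
    obtain ⟨k, rfl⟩ := Nat.exists_eq_add_of_le' hi
    rw [mMat_add_five_add_one]
    refine dvd_add (dvd_add (dvd_add (dvd_add ?_ ?_) ?_) ?_) ?_
    · exact pow_dvd_mul_of_pow_dvd (a := 2) (by norm_num) (ih _) (by omega)
    · exact pow_dvd_mul_of_pow_dvd (a := 2) (by norm_num) (ih _) (by omega)
    · exact pow_dvd_mul_of_pow_dvd (a := 1) (by norm_num) (ih _) (by omega)
    · exact pow_dvd_mul_of_pow_dvd (a := 1) (by norm_num) (ih _) (by omega)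
    · exact (pow_dvd_pow 5 (by omega)).trans (ih k)

theorem aMat_zero_zero : aMat 0 0 = 1 := by
  simp [aMat, mMat]

theorem aMat_zero_of_pos {j : ℕ} (hj : 0 < j) : aMat 0 j = 0 := by
  obtain ⟨l, rfl⟩ : ∃ l, j = l + 1 := ⟨j - 1, by omega⟩
  simp [aMat, mMat]

theorem aMat_of_pos_zero {i : ℕ} (hi : 0 < i) : aMat i 0 = 0 :=
  mMat_eq_zero_of_five_mul_lt (by omega)

theorem bMat_zero_right (i : ℕ) : bMat i 0 = 0 :=
  mMat_eq_zero_of_five_mul_lt (by omega)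

theorem bMat_zero_one : bMat 0 1 = 5 ^ 3 := by
  simp [bMat, mMat]

theorem bMat_one_one : bMat 1 1 = 4 * 5 ^ 3 := by
  norm_num [bMat, mMat]

theorem finsum_mul_aMat_zero (x : ℕ → ℤ) : ∑ᶠ i, x i * aMat i 0 = x 0 := by
  rw [finsum_eq_single _ 0 fun i hi => by rw [aMat_of_pos_zero (Nat.pos_of_ne_zero hi), mul_zero],
    aMat_zero_zero, mul_one]

theorem finsum_mul_bMat_zero (x : ℕ → ℤ) : ∑ᶠ i, x i * bMat i 0 = 0 :=
  finsum_eq_zero_of_forall_eq_zero fun i => by rw [bMat_zero_right, mul_zero]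

theorem five_pow_dvd_finsum_mul_aMat {x : ℕ → ℤ} {E j : ℕ}
    (hx : ∀ i, 0 < i → (5 : ℤ) ^ (E + (5 * i - 7) / 2) ∣ x i) (hj : 0 < j) :
    (5 : ℤ) ^ (E + 2 + (5 * j - 5) / 2) ∣ ∑ᶠ i, x i * aMat i j := by
  refine finsum_induction _ (dvd_zero _) (fun _ _ => dvd_add) fun i => ?_
  rcases Nat.eq_zero_or_pos i with rfl | hi
  · rw [aMat_zero_of_pos hj, mul_zero]
    exact dvd_zero _
  · exact pow_dvd_mul_of_pow_dvd (hx i hi) (five_pow_dvd_mMat_s19 _ _) (by omega)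

theorem five_pow_dvd_finsum_mul_bMat {x : ℕ → ℤ} {E j : ℕ}
    (hx : ∀ i, (5 : ℤ) ^ (E + (5 * i - 5) / 2) ∣ x i) (hj : 0 < j) :
    (5 : ℤ) ^ (E + 3 + (5 * j - 7) / 2) ∣ ∑ᶠ i, x i * bMat i j := by
  refine finsum_induction _ (dvd_zero _) (fun _ _ => dvd_add) fun i => ?_
  by_cases hij : j = 1 ∧ i ≤ 1
  · obtain ⟨rfl, hi⟩ := hij
    interval_cases i
    · exact pow_dvd_mul_of_pow_dvd (hx 0) bMat_zero_one.symm.dvd (by omega)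
    · exact pow_dvd_mul_of_pow_dvd (hx 1) (bMat_one_one ▸ dvd_mul_left _ _) (by omega)
  · exact pow_dvd_mul_of_pow_dvd (hx i) (five_pow_dvd_mMat_s19 _ _)
      (by rcases Nat.lt_or_ge i 2 with hi | hi <;> omega)

theorem xVec_one_zero : xVec 1 0 = -5 := by
  simp [xVec]

theorem five_pow_dvd_xVec_one {i : ℕ} (hi : 0 < i) :
    (5 : ℤ) ^ (4 + (5 * i - 7) / 2) ∣ xVec 1 i := by
  obtain rfl | hi' : i = 1 ∨ 2 ≤ i := by omega
  · simp [xVec]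
  · simp [xVec, show i ≠ 0 by omega, show i ≠ 1 by omega]

theorem xVec_two_mul_add_two (c j : ℕ) :
    xVec (2 * c + 2) j = ∑ᶠ i, xVec (2 * c + 1) i * aMat i j := by
  simp [xVec]

theorem xVec_two_mul_add_three (c j : ℕ) :
    xVec (2 * c + 3) j = ∑ᶠ i, xVec (2 * c + 2) i * bMat i j := by
  simp [xVec, Nat.add_mod]

theorem five_pow_dvd_xVec_two_mul_add_three {c j : ℕ}
    (h : ∀ i, (5 : ℤ) ^ (5 * c + 1 + (5 * i - 5) / 2) ∣ xVec (2 * c + 2) i) (hj : 0 < j) :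
    (5 : ℤ) ^ (5 * c + 4 + (5 * j - 7) / 2) ∣ xVec (2 * c + 3) j := by
  rw [xVec_two_mul_add_three]
  exact five_pow_dvd_finsum_mul_bMat h hj

theorem five_pow_dvd_xVec_two_mul_add_two (c i : ℕ) :
    (5 : ℤ) ^ (5 * c + 1 + (5 * i - 5) / 2) ∣ xVec (2 * c + 2) i := by
  induction c generalizing i with
  | zero =>
    rw [xVec_two_mul_add_two]
    rcases Nat.eq_zero_or_pos i with rfl | hi
    · rw [finsum_mul_aMat_zero, xVec_one_zero]
      norm_num
    · exact (pow_dvd_pow 5 (by omega)).trans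
        (five_pow_dvd_finsum_mul_aMat (fun _ => five_pow_dvd_xVec_one) hi)
  | succ c ih =>
    rw [xVec_two_mul_add_two, show 2 * (c + 1) + 1 = 2 * c + 3 by ring]
    rcases Nat.eq_zero_or_pos i with rfl | hi
    · rw [finsum_mul_aMat_zero, xVec_two_mul_add_three, finsum_mul_bMat_zero]
      exact dvd_zero _
    · exact (pow_dvd_pow 5 (by omega)).trans
        (five_pow_dvd_finsum_mul_aMat (fun _ => five_pow_dvd_xVec_two_mul_add_three ih) hi)

/-- Lemma 3.8: for `b ≥ 2` and `j ≥ 1`,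
`5^(5b − 6 + max(0, ⌊(5j−7)/2⌋))` divides `x_{2b−1,j}` and
`5^(5b − 4 + ⌊(5j−5)/2⌋)` divides `x_{2b,j}`
(natural-number truncated subtraction/division realizes the `max` with `0`). -/
theorem xVec_five_valuation (b j : ℕ) (hb : 2 ≤ b) (hj : 1 ≤ j) :
    (5 : ℤ) ^ (5 * b - 6 + (5 * j - 7) / 2) ∣ xVec (2 * b - 1) j ∧
    (5 : ℤ) ^ (5 * b - 4 + (5 * j - 5) / 2) ∣ xVec (2 * b) j := by
  obtain ⟨c, rfl⟩ : ∃ c, b = c + 2 := ⟨b - 2, by omega⟩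
  refine ⟨?_, ?_⟩
  · convert five_pow_dvd_xVec_two_mul_add_three (five_pow_dvd_xVec_two_mul_add_two c) hj using 2
    all_goals omega
  · convert five_pow_dvd_xVec_two_mul_add_two (c + 1) j using 2
    all_goals omega
end
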